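/- arXiv:2410.15459 — 2 statements merged into one kernel-verified Lean document; each statement's English description precedes it below -/
import Mathlib

section
/- Group-invariant Hahn–Banach separation in the predual: Let X be a Banach space, G a compact group of isometric isomorphisms acting on X, and A ⊆ X* a convex, G*-invariant set that is closed in the G-weak-star topology σ_G(X*, X). If f ∈ X* \ A is G-invariant, then there exists a G-invariant point x ∈ X_G with sup_{h ∈ A} h(x) < f(x). -/
/-!
The topology `σ_G(X*, X)` is the weak topology of the pairing of `X*` with the subspace `X_G` of
`G`-invariant points. The continuous functionals for a weak topology `σ(E, F)` are exactly the
evaluations at points of `F`, so Hahn–Banach separation in the locally convex space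
`(X*, σ_G(X*, X))` produces the separating point directly in `X_G`.
-/

/-- The `G`-weak-star topology `σ_G(X*, X)` on the dual of `X`: the topology of pointwise
convergence on the `G`-invariant points of `X`. -/
noncomputable def weakStarGTopology (X : Type*) [NormedAddCommGroup X] [NormedSpace ℝ X]
    {G : Type*} [Group G] (ρ : G →* (X ≃ₗᵢ[ℝ] X)) : TopologicalSpace (X →L[ℝ] ℝ) :=
  ⨅ x : {x : X // ∀ g : G, ρ g x = x},
    TopologicalSpace.induced (fun f : X →L[ℝ] ℝ => f x.1) inferInstance

open Topology

theorem WeakBilin.exists_lt_of_isClosed_convex {E F : Type*} [AddCommGroup E] [Module ℝ E]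
    [AddCommGroup F] [Module ℝ F] (B : E →ₗ[ℝ] F →ₗ[ℝ] ℝ) {A : Set E} (hAconv : Convex ℝ A)
    (hAclosed : IsClosed[WeakBilin.instTopologicalSpace B] A) {f : E} (hfA : f ∉ A) :
    ∃ y : F, ∃ r : ℝ, (∀ a ∈ A, B a y < r) ∧ r < B f y := by
  obtain ⟨φ, r, hφA, hφf⟩ :=
    geometric_hahn_banach_closed_point (E := WeakBilin B) hAconv hAclosed hfA
  obtain ⟨y, rfl⟩ := LinearMap.dualEmbedding_surjective B φ
  exact ⟨y, r, hφA, hφf⟩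

def fixedSubmodule {X : Type*} [NormedAddCommGroup X] [NormedSpace ℝ X] {G : Type*} [Group G]
    (ρ : G →* (X ≃ₗᵢ[ℝ] X)) : Submodule ℝ X where
  carrier := {x | ∀ g : G, ρ g x = x}
  add_mem' ha hb g := by simp only [map_add, ha g, hb g]
  zero_mem' g := map_zero (ρ g)
  smul_mem' c x hx g := by simp only [map_smul, hx g]

namespace ContinuousLinearMap

variable {X : Type*} [TopologicalSpace X] [AddCommGroup X] [Module ℝ X]

def restrictPairing (M : Submodule ℝ X) : (X →L[ℝ] ℝ) →ₗ[ℝ] M →ₗ[ℝ] ℝ :=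
  (LinearMap.lcomp ℝ ℝ M.subtype).comp (coeLM ℝ)

theorem weakBilin_restrictPairing_eq_iInf_induced (M : Submodule ℝ X) :
    WeakBilin.instTopologicalSpace (restrictPairing M) =
      ⨅ x : M, TopologicalSpace.induced (fun h : X →L[ℝ] ℝ => h x) inferInstance :=
  induced_to_pi _

end ContinuousLinearMap

theorem weakStarGTopology_eq_weakBilin {X : Type*} [NormedAddCommGroup X] [NormedSpace ℝ X]
    {G : Type*} [Group G] (ρ : G →* (X ≃ₗᵢ[ℝ] X)) :
    weakStarGTopology X ρ = WeakBilin.instTopologicalSpace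
      (ContinuousLinearMap.restrictPairing (fixedSubmodule ρ)) :=
  (ContinuousLinearMap.weakBilin_restrictPairing_eq_iInf_induced (fixedSubmodule ρ)).symm

theorem gInvariant_hahnBanach_separation_predual_general
    (X : Type*) [NormedAddCommGroup X] [NormedSpace ℝ X]
    (G : Type*) [Group G]
    (ρ : G →* (X ≃ₗᵢ[ℝ] X))
    (A : Set (X →L[ℝ] ℝ)) (hAconv : Convex ℝ A)
    (hAclosed : @IsClosed _ (weakStarGTopology X ρ) A)
    (f : X →L[ℝ] ℝ) (hfA : f ∉ A) :
    ∃ x : X, (∀ g : G, ρ g x = x) ∧ ∃ r : ℝ, (∀ h ∈ A, h x ≤ r) ∧ r < f x := by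
  rw [weakStarGTopology_eq_weakBilin] at hAclosed
  obtain ⟨⟨x, hx⟩, r, hA, hf⟩ := WeakBilin.exists_lt_of_isClosed_convex _ hAconv hAclosed hfA
  exact ⟨x, hx, r, fun h hh => (hA h hh).le, hf⟩

/-- Group-invariant Hahn–Banach separation in the predual: if `A ⊆ X*` is convex,
`G*`-invariant and `σ_G(X*, X)`-closed, and `f ∈ X* \ A` is `G`-invariant, then there is a
`G`-invariant point `x ∈ X_G` with `sup_{h ∈ A} h x < f x`. -/
theorem gInvariant_hahnBanach_separation_predual
    (X : Type*) [NormedAddCommGroup X] [NormedSpace ℝ X] [CompleteSpace X]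
    (G : Type*) [Group G] [TopologicalSpace G] [IsTopologicalGroup G] [CompactSpace G]
    (ρ : G →* (X ≃ₗᵢ[ℝ] X)) (hρ : ∀ x : X, Continuous fun g : G => ρ g x)
    (A : Set (X →L[ℝ] ℝ)) (hAconv : Convex ℝ A)
    (hAinv : ∀ g : G, (fun h : X →L[ℝ] ℝ =>
      h.comp ((ρ g).toContinuousLinearEquiv : X →L[ℝ] X)) '' A = A)
    (hAclosed : @IsClosed _ (weakStarGTopology X ρ) A)
    (f : X →L[ℝ] ℝ) (hfA : f ∉ A) (hfinv : ∀ g : G, ∀ x : X, f (ρ g x) = f x) :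
    ∃ x : X, (∀ g : G, ρ g x = x) ∧ ∃ r : ℝ, (∀ h ∈ A, h x ≤ r) ∧ r < f x :=
  gInvariant_hahnBanach_separation_predual_general X G ρ A hAconv hAclosed f hfA
end

section
/- G-invariant norming functional: Let X be a Banach space and G a compact group of isometric isomorphisms acting on X. For every G-invariant point x_0 ∈ X_G there exists a G-invariant functional f_0 ∈ X*_G with ‖f_0‖ = ‖x_0‖ and f_0(x_0) = ‖x_0‖². -/
/-!
Average a norming functional of `x₀` (Hahn–Banach) over the Haar probability measure of `G`:
the average is `G`-invariant by left invariance of the measure, is still bounded by `1` because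
every `ρ g` is an isometry, and still takes the value `‖x₀‖` at `x₀` because `x₀` is fixed.
-/

open MeasureTheory

theorem exists_isProbabilityMeasure_isMulLeftInvariant (G : Type*) [Group G]
    [TopologicalSpace G] [IsTopologicalGroup G] [CompactSpace G] [MeasurableSpace G]
    [BorelSpace G] : ∃ μ : Measure G, IsProbabilityMeasure μ ∧ μ.IsMulLeftInvariant :=
  ⟨Measure.haarMeasure ⟨⟨Set.univ, isCompact_univ⟩, by simp⟩, ⟨Measure.haarMeasure_self⟩,
    inferInstance⟩

namespace ContinuousLinearMap

section Average

variable {X E G : Type*} [NormedAddCommGroup X] [NormedSpace ℝ X]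
  [NormedAddCommGroup E] [NormedSpace ℝ E]
  [Group G] [MeasurableSpace G] (μ : Measure G) [IsProbabilityMeasure μ]
  (ρ : G →* (X ≃ₗᵢ[ℝ] X)) (f : X →L[ℝ] E)

theorem norm_integral_apply_inv_smul_le (x : X) :
    ‖∫ g, f (ρ g⁻¹ x) ∂μ‖ ≤ ‖f‖ * ‖x‖ := by
  have h := norm_integral_le_of_norm_le_const (μ := μ) (C := ‖f‖ * ‖x‖)
    (.of_forall fun g => (f.le_opNorm (ρ g⁻¹ x)).trans_eq (by rw [LinearIsometryEquiv.norm_map]))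
  simpa using h

variable [TopologicalSpace G] [IsTopologicalGroup G] [CompactSpace G] [BorelSpace G]
  (hρ : ∀ x : X, Continuous fun g : G => ρ g x)

include hρ in
theorem integrable_apply_inv_smul (x : X) : Integrable (fun g : G => f (ρ g⁻¹ x)) μ :=
  (f.continuous.comp ((hρ x).comp continuous_inv)).integrable_of_hasCompactSupport
    (HasCompactSupport.of_compactSpace _)

noncomputable def average : X →L[ℝ] E :=
  LinearMap.mkContinuous
    { toFun := fun x => ∫ g, f (ρ g⁻¹ x) ∂μ
      map_add' := fun x y => by
        simp only [map_add]
        exact integral_add (f.integrable_apply_inv_smul μ ρ hρ x)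
          (f.integrable_apply_inv_smul μ ρ hρ y)
      map_smul' := fun c x => by
        simp only [map_smul, RingHom.id_apply]
        exact integral_smul c _ }
    ‖f‖ (f.norm_integral_apply_inv_smul_le μ ρ)

theorem average_apply (x : X) : f.average μ ρ hρ x = ∫ g, f (ρ g⁻¹ x) ∂μ := rfl

theorem norm_average_le : ‖f.average μ ρ hρ‖ ≤ ‖f‖ :=
  LinearMap.mkContinuous_norm_le _ (norm_nonneg f) _

theorem average_apply_smul [μ.IsMulLeftInvariant] (h : G) (x : X) :
    f.average μ ρ hρ (ρ h x) = f.average μ ρ hρ x := by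
  have hshift : ∀ g : G, f (ρ g⁻¹ (ρ h x)) = f (ρ (h⁻¹ * g)⁻¹ x) := fun g => by
    rw [mul_inv_rev, inv_inv, map_mul, LinearIsometryEquiv.coe_mul, Function.comp_apply]
  simp only [average_apply, hshift]
  exact integral_mul_left_eq_self (fun g => f (ρ g⁻¹ x)) h⁻¹

theorem average_apply_of_forall_smul_eq [CompleteSpace E] {x : X} (hx : ∀ g : G, ρ g x = x) :
    f.average μ ρ hρ x = f x := by
  have hconst : ∀ g : G, f (ρ g⁻¹ x) = f x := fun g => by rw [hx]
  simp only [average_apply, hconst, integral_const, probReal_univ, one_smul]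

end Average

theorem norm_norm_smul_of_norm_le_one_of_apply_eq_norm {X : Type*} [NormedAddCommGroup X]
    [NormedSpace ℝ X] {f : X →L[ℝ] ℝ} {x : X} (hf : ‖f‖ ≤ 1) (hfx : f x = ‖x‖) :
    ‖‖x‖ • f‖ = ‖x‖ := by
  rw [norm_smul, norm_norm]
  rcases eq_or_ne x 0 with rfl | hx
  · simp
  have hf_ge : 1 ≤ ‖f‖ := by
    refine le_of_mul_le_mul_right ?_ (norm_pos_iff.mpr hx)
    calc 1 * ‖x‖ = ‖f x‖ := by rw [one_mul, hfx, norm_norm]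
      _ ≤ ‖f‖ * ‖x‖ := f.le_opNorm x
  rw [le_antisymm hf hf_ge, mul_one]

end ContinuousLinearMap

theorem gInvariant_norming_functional_general
    (X : Type*) [NormedAddCommGroup X] [NormedSpace ℝ X]
    (G : Type*) [Group G] [TopologicalSpace G] [IsTopologicalGroup G] [CompactSpace G]
    (ρ : G →* (X ≃ₗᵢ[ℝ] X)) (hρ : ∀ x : X, Continuous fun g : G => ρ g x)
    (x₀ : X) (hx₀ : ∀ g : G, ρ g x₀ = x₀) :
    ∃ f₀ : X →L[ℝ] ℝ, (∀ g : G, ∀ x : X, f₀ (ρ g x) = f₀ x) ∧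
      ‖f₀‖ = ‖x₀‖ ∧ f₀ x₀ = ‖x₀‖ ^ 2 := by
  borelize G
  obtain ⟨μ, _, _⟩ := exists_isProbabilityMeasure_isMulLeftInvariant G
  obtain ⟨f, hf_norm, hf_x₀⟩ := exists_dual_vector'' ℝ x₀
  set F := f.average μ ρ hρ
  have hF_x₀ : F x₀ = ‖x₀‖ := (f.average_apply_of_forall_smul_eq μ ρ hρ hx₀).trans hf_x₀
  refine ⟨‖x₀‖ • F, fun g x => ?_, ?_, ?_⟩
  · simp only [smul_apply, F, f.average_apply_smul μ ρ hρ g x]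
  · exact ContinuousLinearMap.norm_norm_smul_of_norm_le_one_of_apply_eq_norm
      ((f.norm_average_le μ ρ hρ).trans hf_norm) hF_x₀
  · rw [smul_apply, hF_x₀, smul_eq_mul, sq]

/-- `G`-invariant norming functional: for every `G`-invariant point `x₀` of a Banach space
`X` acted on by a compact group `G` of isometric isomorphisms, there is a `G`-invariant
continuous linear functional `f₀` with `‖f₀‖ = ‖x₀‖` and `f₀ x₀ = ‖x₀‖ ^ 2`. -/
theorem gInvariant_norming_functional
    (X : Type*) [NormedAddCommGroup X] [NormedSpace ℝ X] [CompleteSpace X]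
    (G : Type*) [Group G] [TopologicalSpace G] [IsTopologicalGroup G] [CompactSpace G]
    (ρ : G →* (X ≃ₗᵢ[ℝ] X)) (hρ : ∀ x : X, Continuous fun g : G => ρ g x)
    (x₀ : X) (hx₀ : ∀ g : G, ρ g x₀ = x₀) :
    ∃ f₀ : X →L[ℝ] ℝ, (∀ g : G, ∀ x : X, f₀ (ρ g x) = f₀ x) ∧
      ‖f₀‖ = ‖x₀‖ ∧ f₀ x₀ = ‖x₀‖ ^ 2 :=
  gInvariant_norming_functional_general X G ρ hρ x₀ hx₀
end
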